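/- arXiv:1904.04535 — 6 statements merged into one kernel-verified Lean document; each statement's English description precedes it below -/
import Mathlib

section
/- Let v1, v2 : [0,1] → ℝ be C¹, nonincreasing, nonnegative. Define S(u,w) = (v2(w) - v1(u))⁺·u - (v2(w) - v1(u))⁻·w on [0,1]². Then S is monotone: for fixed w, u ↦ S(u,w) is nondecreasing, and for fixed u, w ↦ S(u,w) is nonincreasing. -/
open Set

/-! With `d = v2 w - v1 u`, `S u w = max d 0 * u + min d 0 * w` is nondecreasing in `d` and in `u`
and nonincreasing in `w` (for `u, w ≥ 0`), because `max d 0 ≥ 0 ≥ min d 0`. Raising `u` raises `d`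
since `v1` is nonincreasing, and raising `w` lowers `d` since `v2` is nonincreasing. -/

lemma max_mul_add_min_mul_le {d d' u u' w w' : ℝ} (hd : d ≤ d') (hu : 0 ≤ u) (huu : u ≤ u')
    (hw' : 0 ≤ w') (hww : w' ≤ w) :
    max d 0 * u + min d 0 * w ≤ max d' 0 * u' + min d' 0 * w' := by
  have hpos : max d 0 * u ≤ max d' 0 * u' :=
    mul_le_mul (max_le_max_right 0 hd) huu hu (le_max_right d' 0)
  have hneg : min d 0 * w ≤ min d' 0 * w' :=
    calc min d 0 * w ≤ min d 0 * w' := mul_le_mul_of_nonpos_left hww (min_le_right d 0)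
      _ ≤ min d' 0 * w' := mul_le_mul_of_nonneg_right (min_le_min_right 0 hd) hw'
  linarith

theorem source_monotone_general (v1 v2 : ℝ → ℝ)
    (hanti1 : AntitoneOn v1 (Icc 0 1)) (hanti2 : AntitoneOn v2 (Icc 0 1))
    (S : ℝ → ℝ → ℝ)
    (hS : ∀ u w, S u w = max (v2 w - v1 u) 0 * u - (-(min (v2 w - v1 u) 0)) * w) :
    (∀ w ∈ Icc (0:ℝ) 1, ∀ u ∈ Icc (0:ℝ) 1, ∀ u' ∈ Icc (0:ℝ) 1,
      u ≤ u' → S u w ≤ S u' w) ∧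
    (∀ u ∈ Icc (0:ℝ) 1, ∀ w ∈ Icc (0:ℝ) 1, ∀ w' ∈ Icc (0:ℝ) 1,
      w ≤ w' → S u w' ≤ S u w) := by
  have hS' : ∀ u w, S u w = max (v2 w - v1 u) 0 * u + min (v2 w - v1 u) 0 * w := by
    intro u w
    rw [hS]
    ring
  refine ⟨fun w hw u hu u' hu' huu => ?_, fun u hu w hw w' hw' hww => ?_⟩
  · rw [hS', hS']
    exact max_mul_add_min_mul_le (by linarith [hanti1 hu hu' huu]) hu.1 huu hw.1 le_rfl
  · rw [hS', hS']
    exact max_mul_add_min_mul_le (by linarith [hanti2 hw hw' hww]) hu.1 le_rfl hw.1 hww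

/-- Monotonicity of the lane-change source term: `S(u,w)` is nondecreasing in `u`
and nonincreasing in `w`, when `v1, v2` are `C¹`, nonincreasing and nonnegative. -/
theorem source_monotone (v1 v2 : ℝ → ℝ)
    (hdiff1 : ∀ x ∈ Icc (0:ℝ) 1, DifferentiableAt ℝ v1 x)
    (hdiff2 : ∀ x ∈ Icc (0:ℝ) 1, DifferentiableAt ℝ v2 x)
    (hcont1 : ContinuousOn (deriv v1) (Icc 0 1))
    (hcont2 : ContinuousOn (deriv v2) (Icc 0 1))
    (hanti1 : AntitoneOn v1 (Icc 0 1)) (hanti2 : AntitoneOn v2 (Icc 0 1))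
    (hpos1 : ∀ x ∈ Icc (0:ℝ) 1, 0 ≤ v1 x)
    (hpos2 : ∀ x ∈ Icc (0:ℝ) 1, 0 ≤ v2 x)
    (S : ℝ → ℝ → ℝ)
    (hS : ∀ u w, S u w = max (v2 w - v1 u) 0 * u - (-(min (v2 w - v1 u) 0)) * w) :
    (∀ w ∈ Icc (0:ℝ) 1, ∀ u ∈ Icc (0:ℝ) 1, ∀ u' ∈ Icc (0:ℝ) 1,
      u ≤ u' → S u w ≤ S u' w) ∧
    (∀ u ∈ Icc (0:ℝ) 1, ∀ w ∈ Icc (0:ℝ) 1, ∀ w' ∈ Icc (0:ℝ) 1,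
      w ≤ w' → S u w' ≤ S u w) :=
  source_monotone_general v1 v2 hanti1 hanti2 S hS
end

section
/- Let v1, v2, σ1, σ2 ∈ [0,1] and let vℓ1, vℓ2 : [0,1] → ℝ be C¹ nonincreasing nonnegative speed functions with ‖vℓ1‖_{C¹}, ‖vℓ2‖_{C¹} ≤ 𝒱. Define S(u,w) = (vℓ2(w) - vℓ1(u))⁺·u - (vℓ2(w) - vℓ1(u))⁻·w. If ρ > σ (with ρ, σ ∈ [0,1]) then, for any ρ₋, σ₋, ρ₊, σ₊ ∈ [0,1], S(ρ₋, ρ) - S(σ₋, σ) - S(ρ, ρ₊) + S(σ, σ₊) ≤ 𝒱·((ρ₋ - σ₋)⁺ + (ρ₊ - σ₊)⁺) (using that in this form S with appropriate indices is nondecreasing in the first and nonincreasing in the second argument, both with Lipschitz constant ≤ 𝒱). -/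
/-!
Write `S(u, w) = d⁺ u + d⁻ w` with `d = v2 w - v1 u` and `d⁻ = min d 0`. Since `v1` is
nonincreasing, `d` grows with `u`, and so does `S(·, w)`; its increments are bounded by the growth
of `d` (at most `B` per unit, since `u, w ≤ 1`) plus `d⁺ ≤ A` per unit. The identity
`S(u, w) = -T(w, u)`, where `T` is `S` with `v1` and `v2` exchanged, turns `S(u, ·)` into a
nonincreasing function with the same Lipschitz bound. The four-term difference then splits as
`[S(ρ₋,ρ) - S(σ₋,ρ)] + [S(σ₋,ρ) - S(σ₋,σ)] + [S(σ,σ₊) - S(ρ,σ₊)] + [S(ρ,σ₊) - S(ρ,ρ₊)]`,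
where the middle two brackets are `≤ 0` because `σ < ρ` and the outer two are Lipschitz increments.
-/

open Set

def sourceTerm (d u w : ℝ) : ℝ := max d 0 * u + min d 0 * w

lemma sourceTerm_neg_swap (d u w : ℝ) : sourceTerm (-d) w u = -sourceTerm d u w := by
  rw [sourceTerm, sourceTerm, ← neg_zero, max_neg_neg, min_neg_neg, neg_zero]
  ring

lemma sourceTerm_mono {d d' u u' w : ℝ} (hd : d' ≤ d) (huu : u' ≤ u) (hu : 0 ≤ u)
    (hw : 0 ≤ w) : sourceTerm d' u' w ≤ sourceTerm d u w := by
  have hmax : max d' 0 ≤ max d 0 := max_le_max hd le_rfl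
  have hmin : min d' 0 ≤ min d 0 := min_le_min hd le_rfl
  unfold sourceTerm
  linarith [mul_nonneg (sub_nonneg.2 hmax) hu, mul_nonneg (le_max_right d' 0) (sub_nonneg.2 huu),
    mul_nonneg (sub_nonneg.2 hmin) hw]

lemma sourceTerm_sub_le {d d' u u' w : ℝ} (hd : d' ≤ d) (hu : u ≤ 1) (hw : w ≤ 1) :
    sourceTerm d u w - sourceTerm d' u' w ≤ (d - d') + max d' 0 * (u - u') := by
  have hmax : max d' 0 ≤ max d 0 := max_le_max hd le_rfl
  have hmin : min d' 0 ≤ min d 0 := min_le_min hd le_rfl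
  -- the factors `u, w ≤ 1` can only shrink the nonnegative increments of `d⁺` and `d⁻`
  have hsplit : max d 0 + min d 0 = d := (max_add_min d 0).trans (add_zero d)
  have hsplit' : max d' 0 + min d' 0 = d' := (max_add_min d' 0).trans (add_zero d')
  unfold sourceTerm
  linarith [mul_nonneg (sub_nonneg.2 hmax) (sub_nonneg.2 hu),
    mul_nonneg (sub_nonneg.2 hmin) (sub_nonneg.2 hw)]

lemma sub_le_mul_sub_of_abs_deriv_le {f : ℝ → ℝ} {s : Set ℝ} {B x y : ℝ} (hs : Convex ℝ s)
    (hf : ∀ z ∈ s, DifferentiableAt ℝ f z) (hB : ∀ z ∈ s, |deriv f z| ≤ B)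
    (hx : x ∈ s) (hy : y ∈ s) (hxy : x ≤ y) : f x - f y ≤ B * (y - x) := by
  have h := hs.norm_image_sub_le_of_norm_deriv_le hf hB hy hx
  simp only [Real.norm_eq_abs, abs_of_nonpos (sub_nonpos.2 hxy), neg_sub] at h
  exact (le_abs_self _).trans h

section SourceInFirstArgument

variable {f : ℝ → ℝ} {c y : ℝ}

lemma monotoneOn_sourceTerm (hf : AntitoneOn f (Icc 0 1)) (hy : 0 ≤ y) :
    MonotoneOn (fun x ↦ sourceTerm (c - f x) x y) (Icc 0 1) :=
  fun _ hx' _ hx hle ↦ sourceTerm_mono (by linarith [hf hx' hx hle]) hle hx.1 hy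

lemma sourceTerm_sub_le_mul_posPart {A B a b : ℝ} (hf : AntitoneOn f (Icc 0 1))
    (hdiff : ∀ x ∈ Icc (0:ℝ) 1, DifferentiableAt ℝ f x)
    (hB : ∀ x ∈ Icc (0:ℝ) 1, |deriv f x| ≤ B) (hf0 : ∀ x ∈ Icc (0:ℝ) 1, 0 ≤ f x)
    (hc : |c| ≤ A) (hy : y ∈ Icc (0:ℝ) 1) (ha : a ∈ Icc (0:ℝ) 1) (hb : b ∈ Icc (0:ℝ) 1) :
    sourceTerm (c - f a) a y - sourceTerm (c - f b) b y ≤ (B + A) * max (a - b) 0 := by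
  rcases le_total a b with hab | hba
  · rw [max_eq_right (sub_nonpos.2 hab), mul_zero, sub_nonpos]
    exact monotoneOn_sourceTerm hf hy.1 ha hb hab
  have hlip : f b - f a ≤ B * (a - b) :=
    sub_le_mul_sub_of_abs_deriv_le (convex_Icc 0 1) hdiff hB hb ha hba
  have hposPart : max (c - f b) 0 ≤ A :=
    max_le (by linarith [hf0 b hb, le_abs_self c]) ((abs_nonneg c).trans hc)
  rw [max_eq_left (sub_nonneg.2 hba)]
  calc sourceTerm (c - f a) a y - sourceTerm (c - f b) b y
      ≤ ((c - f a) - (c - f b)) + max (c - f b) 0 * (a - b) :=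
        sourceTerm_sub_le (by linarith [hf hb ha hba]) ha.2 hy.2
    _ ≤ (B + A) * (a - b) := by
        linarith [mul_le_mul_of_nonneg_right hposPart (sub_nonneg.2 hba)]

end SourceInFirstArgument

theorem source_comparison_general (v1 v2 : ℝ → ℝ) (𝒱 A B : ℝ)
    (hdiff1 : ∀ x ∈ Icc (0:ℝ) 1, DifferentiableAt ℝ v1 x)
    (hdiff2 : ∀ x ∈ Icc (0:ℝ) 1, DifferentiableAt ℝ v2 x)
    (hanti1 : AntitoneOn v1 (Icc 0 1)) (hanti2 : AntitoneOn v2 (Icc 0 1))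
    (hpos1 : ∀ x ∈ Icc (0:ℝ) 1, 0 ≤ v1 x)
    (hpos2 : ∀ x ∈ Icc (0:ℝ) 1, 0 ≤ v2 x)
    (hA : ∀ x ∈ Icc (0:ℝ) 1, |v1 x| ≤ A ∧ |v2 x| ≤ A)
    (hB : ∀ x ∈ Icc (0:ℝ) 1, |deriv v1 x| ≤ B ∧ |deriv v2 x| ≤ B)
    (hAB : A + B ≤ 𝒱)
    (S : ℝ → ℝ → ℝ)
    (hS : ∀ u w, S u w = max (v2 w - v1 u) 0 * u - (-(min (v2 w - v1 u) 0)) * w)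
    (ρ σ ρm σm ρp σp : ℝ)
    (hρ : ρ ∈ Icc (0:ℝ) 1) (hσ : σ ∈ Icc (0:ℝ) 1)
    (hρm : ρm ∈ Icc (0:ℝ) 1) (hσm : σm ∈ Icc (0:ℝ) 1)
    (hρp : ρp ∈ Icc (0:ℝ) 1) (hσp : σp ∈ Icc (0:ℝ) 1)
    (hgt : σ < ρ) :
    S ρm ρ - S σm σ - S ρ ρp + S σ σp
      ≤ 𝒱 * (max (ρm - σm) 0 + max (ρp - σp) 0) := by
  have hS₁ : ∀ u w, S u w = sourceTerm (v2 w - v1 u) u w := fun u w ↦ by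
    rw [hS, sourceTerm]; ring
  have hS₂ : ∀ u w, S u w = -sourceTerm (v1 u - v2 w) w u := fun u w ↦ by
    rw [hS₁, ← sourceTerm_neg_swap, neg_sub]
  have hρm_σm : S ρm ρ - S σm ρ ≤ (B + A) * max (ρm - σm) 0 := by
    simp only [hS₁]
    exact sourceTerm_sub_le_mul_posPart hanti1 hdiff1 (fun x hx ↦ (hB x hx).1) hpos1
      (hA ρ hρ).2 hρ hρm hσm
  have hρ_σ₁ : S σm ρ ≤ S σm σ := by
    simpa only [hS₂, neg_le_neg_iff] using monotoneOn_sourceTerm hanti2 hσm.1 hσ hρ hgt.le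
  have hρ_σ₂ : S σ σp ≤ S ρ σp := by
    simpa only [hS₁] using monotoneOn_sourceTerm hanti1 hσp.1 hσ hρ hgt.le
  have hρp_σp : S ρ σp - S ρ ρp ≤ (B + A) * max (ρp - σp) 0 := by
    simp only [hS₂, neg_sub_neg]
    exact sourceTerm_sub_le_mul_posPart hanti2 hdiff2 (fun x hx ↦ (hB x hx).2) hpos2
      (hA ρ hρ).1 hρ hρp hσp
  have hBA : (B + A) * (max (ρm - σm) 0 + max (ρp - σp) 0)
      ≤ 𝒱 * (max (ρm - σm) 0 + max (ρp - σp) 0) :=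
    mul_le_mul_of_nonneg_right (by linarith) (by positivity)
  linarith

/-- Key comparison estimate on the source terms used in the L¹-stability proof:
if `ρ > σ`, then `S(ρ₋,ρ) - S(σ₋,σ) - S(ρ,ρ₊) + S(σ,σ₊) ≤ 𝒱·((ρ₋-σ₋)⁺ + (ρ₊-σ₊)⁺)`. -/
theorem source_comparison (v1 v2 : ℝ → ℝ) (𝒱 A B : ℝ)
    (hdiff1 : ∀ x ∈ Icc (0:ℝ) 1, DifferentiableAt ℝ v1 x)
    (hdiff2 : ∀ x ∈ Icc (0:ℝ) 1, DifferentiableAt ℝ v2 x)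
    (hcont1 : ContinuousOn (deriv v1) (Icc 0 1))
    (hcont2 : ContinuousOn (deriv v2) (Icc 0 1))
    (hanti1 : AntitoneOn v1 (Icc 0 1)) (hanti2 : AntitoneOn v2 (Icc 0 1))
    (hpos1 : ∀ x ∈ Icc (0:ℝ) 1, 0 ≤ v1 x)
    (hpos2 : ∀ x ∈ Icc (0:ℝ) 1, 0 ≤ v2 x)
    (hA : ∀ x ∈ Icc (0:ℝ) 1, |v1 x| ≤ A ∧ |v2 x| ≤ A)
    (hB : ∀ x ∈ Icc (0:ℝ) 1, |deriv v1 x| ≤ B ∧ |deriv v2 x| ≤ B)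
    (hAB : A + B ≤ 𝒱)
    (S : ℝ → ℝ → ℝ)
    (hS : ∀ u w, S u w = max (v2 w - v1 u) 0 * u - (-(min (v2 w - v1 u) 0)) * w)
    (ρ σ ρm σm ρp σp : ℝ)
    (hρ : ρ ∈ Icc (0:ℝ) 1) (hσ : σ ∈ Icc (0:ℝ) 1)
    (hρm : ρm ∈ Icc (0:ℝ) 1) (hσm : σm ∈ Icc (0:ℝ) 1)
    (hρp : ρp ∈ Icc (0:ℝ) 1) (hσp : σp ∈ Icc (0:ℝ) 1)
    (hgt : σ < ρ) :
    S ρm ρ - S σm σ - S ρ ρp + S σ σp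
      ≤ 𝒱 * (max (ρm - σm) 0 + max (ρp - σp) 0) :=
  source_comparison_general v1 v2 𝒱 A B hdiff1 hdiff2 hanti1 hanti2 hpos1 hpos2 hA hB hAB S hS ρ σ
    ρm σm ρp σp hρ hσ hρm hσm hρp hσp hgt
end

section
/- Single-cell positivity and boundedness of the splitting step (Case A): let v1, v2, v3 : [0,1] → [0,∞) be C¹, nonincreasing, with v2(1) = 0 and ‖v_i‖_{C¹} ≤ 𝒱 for i = 1,2,3. Let ρ1, ρ2, ρ3 ∈ [0,1] satisfy v2(ρ2) ≥ v1(ρ1) and v3(ρ3) ≥ v2(ρ2). If Δt·𝒱 ≤ 1/2, then ρ2' := ρ2 + Δt·(v2(ρ2) - v1(ρ1))·ρ1 - Δt·(v3(ρ3) - v2(ρ2))·ρ2 satisfies 0 ≤ ρ2' ≤ 1. -/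
/-!
The only ingredient beyond sign bookkeeping is that `v2` vanishes at `1` with `|v2'| ≤ 𝒱`, so the
mean value theorem gives `v2 ρ2 ≤ 𝒱 (1 - ρ2)`: the inflow `Δt (v2 ρ2 - v1 ρ1) ρ1 ≤ Δt v2 ρ2` is then
at most the free space `1 - ρ2`, while the outflow `Δt (v3 ρ3 - v2 ρ2) ρ2 ≤ Δt 𝒱 ρ2` is at most `ρ2`.
-/

open Set

theorem apply_le_mul_sub_of_abs_deriv_le {f : ℝ → ℝ} {a b x C : ℝ}
    (hf : ∀ y ∈ Icc a b, DifferentiableAt ℝ f y) (hbd : ∀ y ∈ Icc a b, |deriv f y| ≤ C)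
    (hfb : f b = 0) (hx : x ∈ Icc a b) : f x ≤ C * (b - x) := by
  have hmvt := (convex_Icc a b).norm_image_sub_le_of_norm_deriv_le hf hbd hx
    (right_mem_Icc.2 (hx.1.trans hx.2))
  rw [hfb, zero_sub, norm_neg, Real.norm_eq_abs, Real.norm_eq_abs, abs_of_nonneg (sub_nonneg.2 hx.2)]
    at hmvt
  exact (le_abs_self _).trans hmvt

theorem source_step_mem_Icc {Δt V ρ1 ρ2 a b c : ℝ} (hρ1 : ρ1 ∈ Icc (0:ℝ) 1)
    (hρ2 : ρ2 ∈ Icc (0:ℝ) 1) (ha : 0 ≤ a) (hab : a ≤ b) (hbc : b ≤ c) (hcV : c ≤ V)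
    (hb : b ≤ V * (1 - ρ2)) (hΔt : 0 ≤ Δt) (hCFL : Δt * V ≤ 1) :
    ρ2 + Δt * ((b - a) * ρ1) - Δt * ((c - b) * ρ2) ∈ Icc (0:ℝ) 1 := by
  obtain ⟨hρ1₀, hρ1₁⟩ := hρ1
  obtain ⟨hρ2₀, hρ2₁⟩ := hρ2
  constructor
  · have hinflow_nonneg : 0 ≤ Δt * ((b - a) * ρ1) :=
      mul_nonneg hΔt (mul_nonneg (sub_nonneg.2 hab) hρ1₀)
    have houtflow : Δt * ((c - b) * ρ2) ≤ ρ2 := calc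
      Δt * ((c - b) * ρ2) ≤ Δt * (V * ρ2) := by gcongr; linarith
      _ = (Δt * V) * ρ2 := by ring
      _ ≤ ρ2 := mul_le_of_le_one_left hρ2₀ hCFL
    linarith
  · have houtflow_nonneg : 0 ≤ Δt * ((c - b) * ρ2) :=
      mul_nonneg hΔt (mul_nonneg (sub_nonneg.2 hbc) hρ2₀)
    have hinflow : Δt * ((b - a) * ρ1) ≤ 1 - ρ2 := calc
      Δt * ((b - a) * ρ1) ≤ Δt * (V * (1 - ρ2)) := by
        refine mul_le_mul_of_nonneg_left ?_ hΔt
        calc (b - a) * ρ1 ≤ b - a := mul_le_of_le_one_right (sub_nonneg.2 hab) hρ1₁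
          _ ≤ V * (1 - ρ2) := by linarith
      _ = (Δt * V) * (1 - ρ2) := by ring
      _ ≤ 1 - ρ2 := mul_le_of_le_one_left (sub_nonneg.2 hρ2₁) hCFL
    linarith

theorem splitting_invariance_caseA_general (v1 v2 v3 : ℝ → ℝ) (𝒱 Δt ρ1 ρ2 ρ3 : ℝ)
    (hdiff2 : ∀ x ∈ Icc (0:ℝ) 1, DifferentiableAt ℝ v2 x)
    (hpos1 : ∀ x ∈ Icc (0:ℝ) 1, 0 ≤ v1 x)
    (hbd2 : ∀ x ∈ Icc (0:ℝ) 1, v2 x ≤ 𝒱 ∧ |deriv v2 x| ≤ 𝒱)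
    (hbd3 : ∀ x ∈ Icc (0:ℝ) 1, v3 x ≤ 𝒱 ∧ |deriv v3 x| ≤ 𝒱)
    (hv21 : v2 1 = 0)
    (hρ1 : ρ1 ∈ Icc (0:ℝ) 1) (hρ2 : ρ2 ∈ Icc (0:ℝ) 1) (hρ3 : ρ3 ∈ Icc (0:ℝ) 1)
    (hcase1 : v1 ρ1 ≤ v2 ρ2) (hcase2 : v2 ρ2 ≤ v3 ρ3)
    (hΔt : 0 ≤ Δt) (hCFL : Δt * 𝒱 ≤ 1/2) :
    ρ2 + Δt * ((v2 ρ2 - v1 ρ1) * ρ1) - Δt * ((v3 ρ3 - v2 ρ2) * ρ2)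
      ∈ Icc (0:ℝ) 1 := by
  have hv2 : v2 ρ2 ≤ 𝒱 * (1 - ρ2) :=
    apply_le_mul_sub_of_abs_deriv_le hdiff2 (fun x hx => (hbd2 x hx).2) hv21 hρ2
  exact source_step_mem_Icc hρ1 hρ2 (hpos1 ρ1 hρ1) hcase1 hcase2 (hbd3 ρ3 hρ3).1 hv2 hΔt
    (by linarith)

/-- Case A of the invariance of `[0,1]` under the operator-splitting source step:
if `v2(ρ2) ≥ v1(ρ1)` and `v3(ρ3) ≥ v2(ρ2)`, and `Δt·𝒱 ≤ 1/2`, then the updated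
value stays in `[0,1]`. -/
theorem splitting_invariance_caseA (v1 v2 v3 : ℝ → ℝ) (𝒱 Δt ρ1 ρ2 ρ3 : ℝ)
    (hdiff1 : ∀ x ∈ Icc (0:ℝ) 1, DifferentiableAt ℝ v1 x)
    (hdiff2 : ∀ x ∈ Icc (0:ℝ) 1, DifferentiableAt ℝ v2 x)
    (hdiff3 : ∀ x ∈ Icc (0:ℝ) 1, DifferentiableAt ℝ v3 x)
    (hcont1 : ContinuousOn (deriv v1) (Icc 0 1))
    (hcont2 : ContinuousOn (deriv v2) (Icc 0 1))
    (hcont3 : ContinuousOn (deriv v3) (Icc 0 1))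
    (hanti1 : AntitoneOn v1 (Icc 0 1)) (hanti2 : AntitoneOn v2 (Icc 0 1))
    (hanti3 : AntitoneOn v3 (Icc 0 1))
    (hpos1 : ∀ x ∈ Icc (0:ℝ) 1, 0 ≤ v1 x)
    (hpos2 : ∀ x ∈ Icc (0:ℝ) 1, 0 ≤ v2 x)
    (hpos3 : ∀ x ∈ Icc (0:ℝ) 1, 0 ≤ v3 x)
    (hbd1 : ∀ x ∈ Icc (0:ℝ) 1, v1 x ≤ 𝒱 ∧ |deriv v1 x| ≤ 𝒱)
    (hbd2 : ∀ x ∈ Icc (0:ℝ) 1, v2 x ≤ 𝒱 ∧ |deriv v2 x| ≤ 𝒱)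
    (hbd3 : ∀ x ∈ Icc (0:ℝ) 1, v3 x ≤ 𝒱 ∧ |deriv v3 x| ≤ 𝒱)
    (hv21 : v2 1 = 0)
    (hρ1 : ρ1 ∈ Icc (0:ℝ) 1) (hρ2 : ρ2 ∈ Icc (0:ℝ) 1) (hρ3 : ρ3 ∈ Icc (0:ℝ) 1)
    (hcase1 : v1 ρ1 ≤ v2 ρ2) (hcase2 : v2 ρ2 ≤ v3 ρ3)
    (hΔt : 0 ≤ Δt) (hCFL : Δt * 𝒱 ≤ 1/2) :
    ρ2 + Δt * ((v2 ρ2 - v1 ρ1) * ρ1) - Δt * ((v3 ρ3 - v2 ρ2) * ρ2)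
      ∈ Icc (0:ℝ) 1 :=
  splitting_invariance_caseA_general v1 v2 v3 𝒱 Δt ρ1 ρ2 ρ3 hdiff2 hpos1 hbd2 hbd3 hv21 hρ1 hρ2 hρ3
    hcase1 hcase2 hΔt hCFL
end

section
/- Single-cell positivity and boundedness of the splitting step (Case D): let v1, v2, v3 : [0,1] → [0,∞) be C¹, nonincreasing, with v2(1) = 0 and ‖v_i‖_{C¹} ≤ 𝒱 for i = 1,2,3. Let ρ1, ρ2, ρ3 ∈ [0,1] satisfy v2(ρ2) < v1(ρ1) and v3(ρ3) < v2(ρ2). If Δt·𝒱 ≤ 1/2, then ρ2' := ρ2 + Δt·(v2(ρ2) - v1(ρ1))·ρ2 - Δt·(v3(ρ3) - v2(ρ2))·ρ3 satisfies 0 ≤ ρ2' ≤ 1. -/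
/-!
The update is `ρ2 (1 - Δt (v1 ρ1 - v2 ρ2)) + Δt (v2 ρ2 - v3 ρ3) ρ3`, a sum of two nonnegative terms
once `Δt (v1 ρ1 - v2 ρ2) ≤ Δt 𝒱 ≤ 1/2`. For the upper bound, the outflow term is nonpositive and the
inflow is at most `Δt v2 ρ2`; since `v2 1 = 0` and `|v2'| ≤ 𝒱`, the mean value theorem gives
`v2 ρ2 ≤ 𝒱 (1 - ρ2)`, so the inflow fits into the free room `1 - ρ2`.
-/

open Set

/-- The source step on the middle cell, with `w1 = v1 ρ1`, `w2 = v2 ρ2`, `w3 = v3 ρ3`. -/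
def splitStep (Δt w1 w2 w3 ρ2 ρ3 : ℝ) : ℝ :=
  ρ2 + Δt * ((w2 - w1) * ρ2) - Δt * ((w3 - w2) * ρ3)

theorem le_mul_sub_of_abs_deriv_le {f : ℝ → ℝ} {a b C x : ℝ}
    (hf : ∀ y ∈ Icc a b, DifferentiableAt ℝ f y) (hf' : ∀ y ∈ Icc a b, |deriv f y| ≤ C)
    (hfb : f b = 0) (hx : x ∈ Icc a b) : f x ≤ C * (b - x) := by
  have hab : a ≤ b := hx.1.trans hx.2
  have hmvt := (convex_Icc a b).norm_image_sub_le_of_norm_deriv_le hf hf' hx (right_mem_Icc.2 hab)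
  simp only [hfb, zero_sub, Real.norm_eq_abs, abs_neg] at hmvt
  calc f x ≤ |f x| := le_abs_self _
    _ ≤ C * |b - x| := hmvt
    _ = C * (b - x) := by rw [abs_of_nonneg (sub_nonneg.2 hx.2)]

theorem splitStep_nonneg {Δt w1 w2 w3 ρ2 ρ3 : ℝ} (hΔt : 0 ≤ Δt) (hρ2 : 0 ≤ ρ2) (hρ3 : 0 ≤ ρ3)
    (hw32 : w3 ≤ w2) (hCFL : Δt * (w1 - w2) ≤ 1) : 0 ≤ splitStep Δt w1 w2 w3 ρ2 ρ3 := by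
  have hsplit : splitStep Δt w1 w2 w3 ρ2 ρ3 = ρ2 * (1 - Δt * (w1 - w2)) + Δt * (w2 - w3) * ρ3 := by
    unfold splitStep; ring
  rw [hsplit]
  have hout : 0 ≤ ρ2 * (1 - Δt * (w1 - w2)) := mul_nonneg hρ2 (by linarith)
  have hin : 0 ≤ Δt * (w2 - w3) * ρ3 := mul_nonneg (mul_nonneg hΔt (by linarith)) hρ3
  linarith

theorem splitStep_le_one {Δt w1 w2 w3 ρ2 ρ3 : ℝ} (hΔt : 0 ≤ Δt) (hρ2 : 0 ≤ ρ2)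
    (hρ3 : ρ3 ∈ Icc (0 : ℝ) 1) (hw21 : w2 ≤ w1) (hw3 : 0 ≤ w3) (hw32 : w3 ≤ w2)
    (hroom : Δt * w2 ≤ 1 - ρ2) : splitStep Δt w1 w2 w3 ρ2 ρ3 ≤ 1 := by
  have hout : Δt * ((w2 - w1) * ρ2) ≤ 0 :=
    mul_nonpos_of_nonneg_of_nonpos hΔt (mul_nonpos_of_nonpos_of_nonneg (by linarith) hρ2)
  have hin : -w2 ≤ (w3 - w2) * ρ3 := by nlinarith [hρ3.1, hρ3.2]
  have hin' := mul_le_mul_of_nonneg_left hin hΔt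
  unfold splitStep
  linarith

theorem splitting_invariance_caseD_general (v1 v2 v3 : ℝ → ℝ) (𝒱 Δt ρ1 ρ2 ρ3 : ℝ)
    (hdiff2 : ∀ x ∈ Icc (0:ℝ) 1, DifferentiableAt ℝ v2 x)
    (hpos2 : ∀ x ∈ Icc (0:ℝ) 1, 0 ≤ v2 x)
    (hpos3 : ∀ x ∈ Icc (0:ℝ) 1, 0 ≤ v3 x)
    (hbd1 : ∀ x ∈ Icc (0:ℝ) 1, v1 x ≤ 𝒱 ∧ |deriv v1 x| ≤ 𝒱)
    (hbd2 : ∀ x ∈ Icc (0:ℝ) 1, v2 x ≤ 𝒱 ∧ |deriv v2 x| ≤ 𝒱)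
    (hv21 : v2 1 = 0)
    (hρ1 : ρ1 ∈ Icc (0:ℝ) 1) (hρ2 : ρ2 ∈ Icc (0:ℝ) 1) (hρ3 : ρ3 ∈ Icc (0:ℝ) 1)
    (hcase1 : v2 ρ2 < v1 ρ1) (hcase2 : v3 ρ3 < v2 ρ2)
    (hΔt : 0 ≤ Δt) (hCFL : Δt * 𝒱 ≤ 1/2) :
    ρ2 + Δt * ((v2 ρ2 - v1 ρ1) * ρ2) - Δt * ((v3 ρ3 - v2 ρ2) * ρ3)
      ∈ Icc (0:ℝ) 1 := by
  have hv2 : v2 ρ2 ≤ 𝒱 * (1 - ρ2) :=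
    le_mul_sub_of_abs_deriv_le hdiff2 (fun x hx => (hbd2 x hx).2) hv21 hρ2
  have hjump : Δt * (v1 ρ1 - v2 ρ2) ≤ 1 := by
    nlinarith [(hbd1 ρ1 hρ1).1, hpos2 ρ2 hρ2]
  have hroom : Δt * v2 ρ2 ≤ 1 - ρ2 := by
    nlinarith [mul_le_mul_of_nonneg_left hv2 hΔt, hρ2.2]
  exact ⟨splitStep_nonneg hΔt hρ2.1 hρ3.1 hcase2.le hjump,
    splitStep_le_one hΔt hρ2.1 hρ3 hcase1.le (hpos3 ρ3 hρ3) hcase2.le hroom⟩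

/-- Case D of the invariance of `[0,1]` under the operator-splitting source step:
if `v2(ρ2) < v1(ρ1)` and `v3(ρ3) < v2(ρ2)`, and `Δt·𝒱 ≤ 1/2`, then the updated
value stays in `[0,1]`. -/
theorem splitting_invariance_caseD (v1 v2 v3 : ℝ → ℝ) (𝒱 Δt ρ1 ρ2 ρ3 : ℝ)
    (hdiff1 : ∀ x ∈ Icc (0:ℝ) 1, DifferentiableAt ℝ v1 x)
    (hdiff2 : ∀ x ∈ Icc (0:ℝ) 1, DifferentiableAt ℝ v2 x)
    (hdiff3 : ∀ x ∈ Icc (0:ℝ) 1, DifferentiableAt ℝ v3 x)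
    (hcont1 : ContinuousOn (deriv v1) (Icc 0 1))
    (hcont2 : ContinuousOn (deriv v2) (Icc 0 1))
    (hcont3 : ContinuousOn (deriv v3) (Icc 0 1))
    (hanti1 : AntitoneOn v1 (Icc 0 1)) (hanti2 : AntitoneOn v2 (Icc 0 1))
    (hanti3 : AntitoneOn v3 (Icc 0 1))
    (hpos1 : ∀ x ∈ Icc (0:ℝ) 1, 0 ≤ v1 x)
    (hpos2 : ∀ x ∈ Icc (0:ℝ) 1, 0 ≤ v2 x)
    (hpos3 : ∀ x ∈ Icc (0:ℝ) 1, 0 ≤ v3 x)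
    (hbd1 : ∀ x ∈ Icc (0:ℝ) 1, v1 x ≤ 𝒱 ∧ |deriv v1 x| ≤ 𝒱)
    (hbd2 : ∀ x ∈ Icc (0:ℝ) 1, v2 x ≤ 𝒱 ∧ |deriv v2 x| ≤ 𝒱)
    (hbd3 : ∀ x ∈ Icc (0:ℝ) 1, v3 x ≤ 𝒱 ∧ |deriv v3 x| ≤ 𝒱)
    (hv21 : v2 1 = 0)
    (hρ1 : ρ1 ∈ Icc (0:ℝ) 1) (hρ2 : ρ2 ∈ Icc (0:ℝ) 1) (hρ3 : ρ3 ∈ Icc (0:ℝ) 1)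
    (hcase1 : v2 ρ2 < v1 ρ1) (hcase2 : v3 ρ3 < v2 ρ2)
    (hΔt : 0 ≤ Δt) (hCFL : Δt * 𝒱 ≤ 1/2) :
    ρ2 + Δt * ((v2 ρ2 - v1 ρ1) * ρ2) - Δt * ((v3 ρ3 - v2 ρ2) * ρ3)
      ∈ Icc (0:ℝ) 1 :=
  splitting_invariance_caseD_general v1 v2 v3 𝒱 Δt ρ1 ρ2 ρ3 hdiff2 hpos2 hpos3 hbd1 hbd2 hv21 hρ1
    hρ2 hρ3 hcase1 hcase2 hΔt hCFL
end

section
/- L¹-contraction of a monotone conservative three-point scheme: let G : [0,1]² → ℝ be nondecreasing in its first argument, nonincreasing in its second, Lipschitz in both with constant 𝒱, and let λ·𝒱 ≤ 1/2. For sequences (u_k), (w_k) ∈ ℓ¹(ℤ; [0,1]), define Hu_k = u_k - λ·(G(u_k, u_{k+1}) - G(u_{k-1}, u_k)) and similarly Hw. Then ∑_{k∈ℤ} |Hu_k - Hw_k| ≤ ∑_{k∈ℤ} |u_k - w_k|. -/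
/-!
Write `d k = u k - w k` and split the difference of the numerical fluxes at the interface
`k + ½` as `A k + B k`, where `A k` changes only the left argument of `G` and `B k` only the
right one. Monotonicity of `G` makes `A k` carry the sign of `d k` and `B k` the opposite sign
of `d (k + 1)`; the Lipschitz bound and the CFL condition give `|A k| ≤ |d k| / 2` and
`|B k| ≤ |d (k + 1)| / 2` (Harten's incremental coefficients lie in `[0, 1/2]`). Then
`Hu k - Hw k = (d k - A k + B (k - 1)) + (A (k - 1) - B k)`, the first bracket has modulus
`|d k| - |A k| - |B (k - 1)|`, and the remaining terms telescope on summation over `ℤ`.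
-/

open Set

theorem abs_sub_add_eq_of_sign {a b d : ℝ} (ha : 0 ≤ a * d) (hb : b * d ≤ 0)
    (hab : |a| + |b| ≤ |d|) : |d - a + b| = |d| - |a| - |b| := by
  rcases abs_cases d with ⟨hd, hd'⟩ | ⟨hd, hd'⟩ <;>
  rcases abs_cases a with ⟨haa, ha'⟩ | ⟨haa, ha'⟩ <;>
  rcases abs_cases b with ⟨hbb, hb'⟩ | ⟨hbb, hb'⟩ <;>
  first
  | (rw [abs_of_nonneg] <;> nlinarith)
  | (rw [abs_of_nonpos] <;> nlinarith)

theorem summable_and_tsum_le_of_le_add_sub_pred {f c a : ℤ → ℝ} (hf : ∀ k, 0 ≤ f k)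
    (hc : Summable c) (ha : Summable a) (h : ∀ k, f k ≤ c k + (a (k - 1) - a k)) :
    Summable f ∧ ∑' k, f k ≤ ∑' k, c k := by
  have ha_pred : Summable fun k => a (k - 1) := (Equiv.subRight 1).summable_iff.2 ha
  have hbound : Summable fun k => c k + (a (k - 1) - a k) := hc.add (ha_pred.sub ha)
  have hfs : Summable f := hbound.of_nonneg_of_le hf h
  have hshift : ∑' k, a (k - 1) = ∑' k, a k := (Equiv.subRight 1).tsum_eq a
  refine ⟨hfs, ?_⟩
  calc ∑' k, f k ≤ ∑' k, (c k + (a (k - 1) - a k)) := hfs.tsum_le_tsum h hbound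
    _ = ∑' k, c k := by
      rw [hc.tsum_add (ha_pred.sub ha), ha_pred.tsum_sub ha, hshift, sub_self, add_zero]

theorem harten_l1_contraction {d A B : ℤ → ℝ} (hd : Summable fun k => |d k|)
    (hA : ∀ k, 0 ≤ A k * d k) (hB : ∀ k, B k * d (k + 1) ≤ 0)
    (hA_le : ∀ k, |A k| ≤ |d k| / 2) (hB_le : ∀ k, |B k| ≤ |d (k + 1)| / 2) :
    Summable (fun k => |d k - (A k + B k) + (A (k - 1) + B (k - 1))|) ∧
      ∑' k, |d k - (A k + B k) + (A (k - 1) + B (k - 1))| ≤ ∑' k, |d k| := by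
  have hAs : Summable fun k => |A k| :=
    (hd.div_const 2).of_nonneg_of_le (fun _ => abs_nonneg _) hA_le
  have hBs : Summable fun k => |B k| :=
    (((Equiv.addRight 1).summable_iff.2 hd).div_const 2).of_nonneg_of_le
      (fun _ => abs_nonneg _) hB_le
  refine summable_and_tsum_le_of_le_add_sub_pred (a := fun k => |A k| - |B k|)
    (fun _ => abs_nonneg _) hd (hAs.sub hBs) fun k => ?_
  have hB_pred : B (k - 1) * d k ≤ 0 := by simpa using hB (k - 1)
  have hB_pred_le : |B (k - 1)| ≤ |d k| / 2 := by simpa using hB_le (k - 1)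
  have hcentre := abs_sub_add_eq_of_sign (hA k) hB_pred (by linarith [hA_le k])
  calc |d k - (A k + B k) + (A (k - 1) + B (k - 1))|
      = |(d k - A k + B (k - 1)) + (A (k - 1) - B k)| := by ring_nf
    _ ≤ |d k - A k + B (k - 1)| + |A (k - 1) - B k| := abs_add_le _ _
    _ ≤ (|d k| - |A k| - |B (k - 1)|) + (|A (k - 1)| + |B k|) :=
      add_le_add hcentre.le (abs_sub _ _)
    _ = |d k| + ((|A (k - 1)| - |B (k - 1)|) - (|A k| - |B k|)) := by ring

theorem abs_mul_le_half_of_abs_le {lam V p q : ℝ} (hlam : 0 ≤ lam) (hCFL : lam * V ≤ 1 / 2)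
    (h : |p| ≤ V * |q|) : |lam * p| ≤ |q| / 2 := by
  rw [abs_mul, abs_of_nonneg hlam]
  nlinarith [mul_le_mul_of_nonneg_left h hlam, abs_nonneg q]

/-- L¹-contraction of a monotone conservative three-point scheme under a CFL
condition. -/
theorem scheme_l1_contraction (G : ℝ → ℝ → ℝ) (𝒱 lam : ℝ)
    (hlam : 0 ≤ lam) (hCFL : lam * 𝒱 ≤ 1/2)
    (hmono1 : ∀ w ∈ Icc (0:ℝ) 1, ∀ u ∈ Icc (0:ℝ) 1, ∀ u' ∈ Icc (0:ℝ) 1,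
      u ≤ u' → G u w ≤ G u' w)
    (hmono2 : ∀ u ∈ Icc (0:ℝ) 1, ∀ w ∈ Icc (0:ℝ) 1, ∀ w' ∈ Icc (0:ℝ) 1,
      w ≤ w' → G u w' ≤ G u w)
    (hLip1 : ∀ u ∈ Icc (0:ℝ) 1, ∀ u' ∈ Icc (0:ℝ) 1, ∀ w ∈ Icc (0:ℝ) 1,
      |G u w - G u' w| ≤ 𝒱 * |u - u'|)
    (hLip2 : ∀ u ∈ Icc (0:ℝ) 1, ∀ w ∈ Icc (0:ℝ) 1, ∀ w' ∈ Icc (0:ℝ) 1,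
      |G u w - G u w'| ≤ 𝒱 * |w - w'|)
    (u w : ℤ → ℝ)
    (hu : ∀ k, u k ∈ Icc (0:ℝ) 1) (hw : ∀ k, w k ∈ Icc (0:ℝ) 1)
    (hsum : Summable fun k => |u k - w k|)
    (Hu Hw : ℤ → ℝ)
    (hHu : ∀ k, Hu k = u k - lam * (G (u k) (u (k+1)) - G (u (k-1)) (u k)))
    (hHw : ∀ k, Hw k = w k - lam * (G (w k) (w (k+1)) - G (w (k-1)) (w k))) :
    Summable (fun k => |Hu k - Hw k|) ∧
    ∑' k, |Hu k - Hw k| ≤ ∑' k, |u k - w k| := by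
  have hG_left (y) (hy : y ∈ Icc (0:ℝ) 1) : MonovaryOn (G · y) id (Icc 0 1) :=
    monovaryOn_id_iff.2 fun _ hx _ hx' hle => hmono1 y hy _ hx _ hx' hle
  have hG_right (x) (hx : x ∈ Icc (0:ℝ) 1) : AntivaryOn (G x) id (Icc 0 1) :=
    antivaryOn_id_iff.2 fun _ hy _ hy' hle => hmono2 x hx _ hy _ hy' hle
  set A : ℤ → ℝ := fun k => lam * (G (u k) (u (k+1)) - G (w k) (u (k+1)))
  set B : ℤ → ℝ := fun k => lam * (G (w k) (u (k+1)) - G (w k) (w (k+1)))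
  have hdiff : ∀ k, Hu k - Hw k = (u k - w k) - (A k + B k) + (A (k-1) + B (k-1)) := by
    intro k
    simp only [A, B, hHu, hHw, sub_add_cancel]
    ring
  simp only [hdiff]
  refine harten_l1_contraction hsum (fun k => ?_) (fun k => ?_) (fun k => ?_) (fun k => ?_)
  · rw [mul_assoc]
    exact mul_nonneg hlam ((hG_left _ (hu (k+1))).sub_mul_sub_nonneg (hw k) (hu k))
  · rw [mul_assoc]
    exact mul_nonpos_of_nonneg_of_nonpos hlam
      ((hG_right _ (hw k)).sub_mul_sub_nonpos (hw (k+1)) (hu (k+1)))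
  · exact abs_mul_le_half_of_abs_le hlam hCFL (hLip1 _ (hu k) _ (hw k) _ (hu (k+1)))
  · exact abs_mul_le_half_of_abs_le hlam hCFL (hLip2 _ (hw k) _ (hu (k+1)) _ (hw (k+1)))
end

section
/- Crandall–Majda entropy inequality for a monotone scheme: let 𝒢 : [0,1]³ → [0,1] be given by 𝒢(u,w,z) = w - λ(F(w,z) - F(u,w)) for a numerical flux F nondecreasing in its first and nonincreasing in its second argument with F(c,c) = f(c), under a CFL condition guaranteeing that 𝒢 is nondecreasing in each argument. Then for all u,w,z,c ∈ [0,1]: |𝒢(u,w,z) - c| ≤ |w - c| - λ·(ℱ^c(w,z) - ℱ^c(u,w)), where ℱ^c(a,b) = F(a∨c, b∨c) - F(a∧c, b∧c). -/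
open Set

/-- Crandall–Majda discrete entropy inequality for a monotone scheme
`𝒢(u,w,z) = w - λ(F(w,z) - F(u,w))` with a consistent monotone numerical flux. -/
theorem crandall_majda_entropy (F : ℝ → ℝ → ℝ) (f : ℝ → ℝ) (lam : ℝ)
    (hlam : 0 ≤ lam)
    (hFmono1 : ∀ w ∈ Icc (0:ℝ) 1, ∀ u ∈ Icc (0:ℝ) 1, ∀ u' ∈ Icc (0:ℝ) 1,
      u ≤ u' → F u w ≤ F u' w)
    (hFmono2 : ∀ u ∈ Icc (0:ℝ) 1, ∀ w ∈ Icc (0:ℝ) 1, ∀ w' ∈ Icc (0:ℝ) 1,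
      w ≤ w' → F u w' ≤ F u w)
    (hFcons : ∀ c ∈ Icc (0:ℝ) 1, F c c = f c)
    (𝒢 : ℝ → ℝ → ℝ → ℝ)
    (h𝒢 : ∀ u w z, 𝒢 u w z = w - lam * (F w z - F u w))
    -- CFL condition: the scheme is monotone in each argument on [0,1]
    (h𝒢mono1 : ∀ w ∈ Icc (0:ℝ) 1, ∀ z ∈ Icc (0:ℝ) 1, ∀ u ∈ Icc (0:ℝ) 1,
      ∀ u' ∈ Icc (0:ℝ) 1, u ≤ u' → 𝒢 u w z ≤ 𝒢 u' w z)
    (h𝒢mono2 : ∀ u ∈ Icc (0:ℝ) 1, ∀ z ∈ Icc (0:ℝ) 1, ∀ w ∈ Icc (0:ℝ) 1,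
      ∀ w' ∈ Icc (0:ℝ) 1, w ≤ w' → 𝒢 u w z ≤ 𝒢 u w' z)
    (h𝒢mono3 : ∀ u ∈ Icc (0:ℝ) 1, ∀ w ∈ Icc (0:ℝ) 1, ∀ z ∈ Icc (0:ℝ) 1,
      ∀ z' ∈ Icc (0:ℝ) 1, z ≤ z' → 𝒢 u w z ≤ 𝒢 u w z')
    (ℱ : ℝ → ℝ → ℝ → ℝ)
    (hℱ : ∀ c a b, ℱ c a b = F (max a c) (max b c) - F (min a c) (min b c)) :
    ∀ u ∈ Icc (0:ℝ) 1, ∀ w ∈ Icc (0:ℝ) 1, ∀ z ∈ Icc (0:ℝ) 1, ∀ c ∈ Icc (0:ℝ) 1,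
      |𝒢 u w z - c| ≤ |w - c| - lam * (ℱ c w z - ℱ c u w) := by

  intro u hu w hw z hz c hc
  have hmaxmem : ∀ a : ℝ, a ∈ Icc (0:ℝ) 1 → max a c ∈ Icc (0:ℝ) 1 := fun a ha =>
    ⟨le_max_of_le_left ha.1, max_le ha.2 hc.2⟩
  have hminmem : ∀ a : ℝ, a ∈ Icc (0:ℝ) 1 → min a c ∈ Icc (0:ℝ) 1 := fun a ha =>
    ⟨le_min ha.1 hc.1, min_le_of_left_le ha.2⟩
  -- 𝒢 at diagonal equals c
  have hGc : 𝒢 c c c = c := by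
    rw [h𝒢]; ring
  -- upper bound: 𝒢 u w z ≤ 𝒢 (u⊔c) (w⊔c) (z⊔c), and c ≤ same
  have hup1 : 𝒢 u w z ≤ 𝒢 (max u c) (max w c) (max z c) := by
    calc 𝒢 u w z ≤ 𝒢 (max u c) w z :=
          h𝒢mono1 w hw z hz u hu _ (hmaxmem u hu) (le_max_left _ _)
      _ ≤ 𝒢 (max u c) (max w c) z :=
          h𝒢mono2 _ (hmaxmem u hu) z hz w hw _ (hmaxmem w hw) (le_max_left _ _)
      _ ≤ 𝒢 (max u c) (max w c) (max z c) :=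
          h𝒢mono3 _ (hmaxmem u hu) _ (hmaxmem w hw) z hz _ (hmaxmem z hz) (le_max_left _ _)
  have hup2 : c ≤ 𝒢 (max u c) (max w c) (max z c) := by
    calc c = 𝒢 c c c := hGc.symm
      _ ≤ 𝒢 (max u c) c c :=
          h𝒢mono1 c hc c hc c hc _ (hmaxmem u hu) (le_max_right _ _)
      _ ≤ 𝒢 (max u c) (max w c) c :=
          h𝒢mono2 _ (hmaxmem u hu) c hc c hc _ (hmaxmem w hw) (le_max_right _ _)
      _ ≤ 𝒢 (max u c) (max w c) (max z c) :=
          h𝒢mono3 _ (hmaxmem u hu) _ (hmaxmem w hw) c hc _ (hmaxmem z hz) (le_max_right _ _)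
  have hlo1 : 𝒢 (min u c) (min w c) (min z c) ≤ 𝒢 u w z := by
    calc 𝒢 (min u c) (min w c) (min z c) ≤ 𝒢 u (min w c) (min z c) :=
          h𝒢mono1 _ (hminmem w hw) _ (hminmem z hz) _ (hminmem u hu) u hu (min_le_left _ _)
      _ ≤ 𝒢 u w (min z c) :=
          h𝒢mono2 u hu _ (hminmem z hz) _ (hminmem w hw) w hw (min_le_left _ _)
      _ ≤ 𝒢 u w z :=
          h𝒢mono3 u hu w hw _ (hminmem z hz) z hz (min_le_left _ _)
  have hlo2 : 𝒢 (min u c) (min w c) (min z c) ≤ c := by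
    calc 𝒢 (min u c) (min w c) (min z c) ≤ 𝒢 c (min w c) (min z c) :=
          h𝒢mono1 _ (hminmem w hw) _ (hminmem z hz) _ (hminmem u hu) c hc (min_le_right _ _)
      _ ≤ 𝒢 c c (min z c) :=
          h𝒢mono2 c hc _ (hminmem z hz) _ (hminmem w hw) c hc (min_le_right _ _)
      _ ≤ 𝒢 c c c :=
          h𝒢mono3 c hc c hc _ (hminmem z hz) c hc (min_le_right _ _)
      _ = c := hGc
  have key : |𝒢 u w z - c| ≤ 𝒢 (max u c) (max w c) (max z c) - 𝒢 (min u c) (min w c) (min z c) := by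
    rw [abs_sub_le_iff]
    constructor <;> linarith
  have habs : |w - c| = max w c - min w c := by
    rcases le_total w c with h | h
    · rw [abs_of_nonpos (by linarith), max_eq_right h, min_eq_left h]; ring
    · rw [abs_of_nonneg (by linarith), max_eq_left h, min_eq_right h]
  calc |𝒢 u w z - c| ≤ 𝒢 (max u c) (max w c) (max z c) - 𝒢 (min u c) (min w c) (min z c) := key
    _ = |w - c| - lam * (ℱ c w z - ℱ c u w) := by
        rw [h𝒢, h𝒢, hℱ, hℱ, habs]; ring
end
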